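/- Let D ⊆ ℝ² be open and let x₀, t : D → ℂ³ and R : D → Matrix (Fin 3) (Fin 3) ℂ be twice continuously differentiable with (R p)ᵀ * R p = 1 for all p ∈ D. Define x p := (R p).mulVec (x₀ p) + t p and assume fderiv ℝ x p v = (R p).mulVec (fderiv ℝ x₀ p v) for all p ∈ D, v ∈ ℝ². Then for all p ∈ D and all v, w ∈ ℝ²: (fderiv ℝ x₀ p v) ⬝ (((R p)ᵀ * fderiv ℝ R p v).mulVec (fderiv ℝ x₀ p w)) = 0. (This is the paper's equation dx₀ᵀ R⁻¹dR dx₀ = 0.) -/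

import Mathlib

open Matrix

noncomputable instance : NormedAddCommGroup (Matrix (Fin 3) (Fin 3) ℂ) :=
  Matrix.normedAddCommGroup

noncomputable instance : NormedSpace ℝ (Matrix (Fin 3) (Fin 3) ℂ) :=
  Matrix.normedSpace

/-- The symmetric bilinear dot product on ℂ³ (not the Hermitian inner product). -/
def dot3 (x y : Fin 3 → ℂ) : ℂ := x 0 * y 0 + x 1 * y 1 + x 2 * y 2

/-!
Write `ω(v) = Rᵀ dR(v)`. Differentiating `Rᵀ R = 1` shows that every `ω(v)` is skew-symmetric.
Comparing `dx = dR x₀ + R dx₀ + dt` with `dx = R dx₀` gives `dR(v) x₀ + dt(v) = 0`;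
differentiating once more and using the symmetry of the second derivatives of `R` and `t` gives
`dR(v) dx₀(w) = dR(w) dx₀(v)`, i.e. `ω(v) dx₀(w) = ω(w) dx₀(v)`. Hence
`dx₀(v) ⬝ ω(v) dx₀(w) = dx₀(v) ⬝ ω(w) dx₀(v)`, which vanishes because `ω(w)` is skew.
-/

open Filter Topology

lemma dot3_eq_dotProduct (x y : Fin 3 → ℂ) : dot3 x y = x ⬝ᵥ y := by
  simp [dot3, dotProduct, Fin.sum_univ_three]

lemma dotProduct_mulVec_self_eq_zero_of_transpose_eq_neg {n R : Type*} [Fintype n] [CommRing R]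
    [NoZeroDivisors R] [CharZero R] {A : Matrix n n R} (hA : Aᵀ = -A) (x : n → R) :
    x ⬝ᵥ (A *ᵥ x) = 0 := by
  have h : x ⬝ᵥ (A *ᵥ x) = -(x ⬝ᵥ (A *ᵥ x)) := by
    calc x ⬝ᵥ (A *ᵥ x) = x ⬝ᵥ (Aᵀ *ᵥ x) := by
          rw [dotProduct_mulVec, ← mulVec_transpose, dotProduct_comm]
      _ = -(x ⬝ᵥ (A *ᵥ x)) := by rw [hA, neg_mulVec, dotProduct_neg]
  exact CharZero.neg_eq_self_iff.mp h.symm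

section FirstDerivative

variable {𝕜 : Type*} [NontriviallyNormedField 𝕜]
  {E F G H : Type*} [NormedAddCommGroup E] [NormedSpace 𝕜 E] [NormedAddCommGroup F]
  [NormedSpace 𝕜 F] [NormedAddCommGroup G] [NormedSpace 𝕜 G] [NormedAddCommGroup H]
  [NormedSpace 𝕜 H] {f : E → F} {g : E → G} {t : E → H} {p : E}

lemma fderiv_bilinear_apply (B : F →L[𝕜] G →L[𝕜] H) (hf : DifferentiableAt 𝕜 f p)
    (hg : DifferentiableAt 𝕜 g p) (v : E) :
    fderiv 𝕜 (fun q => B (f q) (g q)) p v =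
      B (fderiv 𝕜 f p v) (g p) + B (f p) (fderiv 𝕜 g p v) := by
  rw [B.fderiv_of_bilinear hf hg]
  simp [add_comm]

lemma bilinear_fderiv_add_eq_zero_of_eventuallyEq_const (B : F →L[𝕜] F →L[𝕜] H) {c : H}
    (hf : DifferentiableAt 𝕜 f p) (hc : (fun q => B (f q) (f q)) =ᶠ[𝓝 p] fun _ => c) (v : E) :
    B (fderiv 𝕜 f p v) (f p) + B (f p) (fderiv 𝕜 f p v) = 0 := by
  rw [← fderiv_bilinear_apply B hf hf, hc.fderiv_eq, fderiv_const_apply]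
  rfl

lemma bilinear_fderiv_add_fderiv_eq_zero (B : F →L[𝕜] G →L[𝕜] H) {x : E → H}
    (hx : ∀ q, x q = B (f q) (g q) + t q) (hf : DifferentiableAt 𝕜 f p)
    (hg : DifferentiableAt 𝕜 g p) (ht : DifferentiableAt 𝕜 t p)
    (hdx : ∀ v, fderiv 𝕜 x p v = B (f p) (fderiv 𝕜 g p v)) (v : E) :
    B (fderiv 𝕜 f p v) (g p) + fderiv 𝕜 t p v = 0 := by
  have hBfg := (B.hasFDerivAt_of_bilinear hf.hasFDerivAt hg.hasFDerivAt).differentiableAt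
  have h := hdx v
  rw [funext hx, fderiv_fun_add hBfg ht, _root_.add_apply, fderiv_bilinear_apply B hf hg,
    add_right_comm] at h
  exact add_eq_right.mp h

lemma fderiv_clm_apply_const {Φ : E → F →L[𝕜] G} (hΦ : DifferentiableAt 𝕜 Φ p) (a : F) (b : E) :
    fderiv 𝕜 (fun q => Φ q a) p b = fderiv 𝕜 Φ p b a := by
  simp [fderiv_clm_apply hΦ (differentiableAt_const a)]

end FirstDerivative

section SecondDerivative

variable {E F G H : Type*} [NormedAddCommGroup E] [NormedSpace ℝ E] [NormedAddCommGroup F]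
  [NormedSpace ℝ F] [NormedAddCommGroup G] [NormedSpace ℝ G] [NormedAddCommGroup H]
  [NormedSpace ℝ H] {A : E → F} {u : E → G} {t : E → H} {p : E}

lemma bilinear_fderiv_fderiv_comm (B : F →L[ℝ] G →L[ℝ] H) (hA : ContDiffAt ℝ 2 A p)
    (hu : DifferentiableAt ℝ u p) (ht : ContDiffAt ℝ 2 t p)
    (h0 : ∀ᶠ q in 𝓝 p, ∀ v, B (fderiv ℝ A q v) (u q) + fderiv ℝ t q v = 0) (v w : E) :
    B (fderiv ℝ A p v) (fderiv ℝ u p w) = B (fderiv ℝ A p w) (fderiv ℝ u p v) := by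
  have hA' : DifferentiableAt ℝ (fderiv ℝ A) p :=
    (hA.fderiv_right (m := 1) le_rfl).differentiableAt one_ne_zero
  have ht' : DifferentiableAt ℝ (fderiv ℝ t) p :=
    (ht.fderiv_right (m := 1) le_rfl).differentiableAt one_ne_zero
  have second_order : ∀ a b, B (fderiv ℝ (fderiv ℝ A) p b a) (u p) + B (fderiv ℝ A p a)
      (fderiv ℝ u p b) + fderiv ℝ (fderiv ℝ t) p b a = 0 := by
    intro a b
    have hAa := hA'.clm_apply (differentiableAt_const a)
    have hBAu := (B.hasFDerivAt_of_bilinear hAa.hasFDerivAt hu.hasFDerivAt).differentiableAt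
    have hzero : (fun q => B (fderiv ℝ A q a) (u q) + fderiv ℝ t q a) =ᶠ[𝓝 p] fun _ => 0 :=
      h0.mono fun q hq => hq a
    have := DFunLike.congr_fun (hzero.fderiv_eq (𝕜 := ℝ)) b
    simpa only [fderiv_fun_add hBAu (ht'.clm_apply (differentiableAt_const a)), _root_.add_apply,
      fderiv_bilinear_apply B hAa hu, fderiv_clm_apply_const hA', fderiv_clm_apply_const ht', fderiv_const_apply,
      _root_.zero_apply] using this
  have hsymA := hA.isSymmSndFDerivAt (by simp) v w
  have hsymt := ht.isSymmSndFDerivAt (by simp) v w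
  have h := (second_order v w).trans (second_order w v).symm
  rw [hsymA, hsymt] at h
  exact add_left_cancel (add_right_cancel h)

end SecondDerivative

noncomputable def mulVecCLM :
    Matrix (Fin 3) (Fin 3) ℂ →L[ℝ] (Fin 3 → ℂ) →L[ℝ] Fin 3 → ℂ :=
  (mulVecBilin ℝ ℝ).toContinuousBilinearMap

noncomputable def transposeMulCLM :
    Matrix (Fin 3) (Fin 3) ℂ →L[ℝ] Matrix (Fin 3) (Fin 3) ℂ →L[ℝ] Matrix (Fin 3) (Fin 3) ℂ :=
  (LinearMap.mul ℝ _ ∘ₗ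
    (transposeLinearEquiv (Fin 3) (Fin 3) ℝ ℂ).toLinearMap).toContinuousBilinearMap

lemma transpose_mul_fderiv_transpose_eq_neg {E : Type*} [NormedAddCommGroup E] [NormedSpace ℝ E]
    {R : E → Matrix (Fin 3) (Fin 3) ℂ} {p : E} (hR : DifferentiableAt ℝ R p)
    (horth : ∀ᶠ q in 𝓝 p, (R q)ᵀ * R q = 1) (v : E) :
    ((R p)ᵀ * fderiv ℝ R p v)ᵀ = -((R p)ᵀ * fderiv ℝ R p v) := by
  have h : (fderiv ℝ R p v)ᵀ * R p + (R p)ᵀ * fderiv ℝ R p v = 0 :=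
    bilinear_fderiv_add_eq_zero_of_eventuallyEq_const transposeMulCLM hR horth v
  rw [transpose_mul, transpose_transpose]
  exact eq_neg_of_add_eq_zero_left h

/-- The paper's equation dx₀ᵀ R⁻¹dR dx₀ = 0 for a rolling. -/
theorem rolling_dx0_skew (D : Set (ℝ × ℝ)) (hD : IsOpen D)
    (x₀ t : ℝ × ℝ → Fin 3 → ℂ) (R : ℝ × ℝ → Matrix (Fin 3) (Fin 3) ℂ)
    (hx₀ : ContDiffOn ℝ 2 x₀ D) (ht : ContDiffOn ℝ 2 t D) (hR : ContDiffOn ℝ 2 R D)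
    (horth : ∀ p ∈ D, (R p)ᵀ * R p = 1)
    (x : ℝ × ℝ → Fin 3 → ℂ)
    (hx : ∀ p, x p = (R p).mulVec (x₀ p) + t p)
    (hdx : ∀ p ∈ D, ∀ v : ℝ × ℝ, fderiv ℝ x p v = (R p).mulVec (fderiv ℝ x₀ p v)) :
    ∀ p ∈ D, ∀ v w : ℝ × ℝ,
      dot3 (fderiv ℝ x₀ p v)
        (((R p)ᵀ * fderiv ℝ R p v).mulVec (fderiv ℝ x₀ p w)) = 0 := by
  intro p hp v w
  have hpD : D ∈ 𝓝 p := hD.mem_nhds hp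
  have differentiable {F : Type} [NormedAddCommGroup F] [NormedSpace ℝ F] {f : ℝ × ℝ → F}
      (hf : ContDiffOn ℝ 2 f D) {q} (hq : q ∈ D) : DifferentiableAt ℝ f q :=
    (hf.differentiableOn two_ne_zero).differentiableAt (hD.mem_nhds hq)
  have hskew := transpose_mul_fderiv_transpose_eq_neg (differentiable hR hp)
    (eventually_of_mem hpD horth) w
  have hdt : ∀ᶠ q in 𝓝 p, ∀ u, (fderiv ℝ R q u) *ᵥ x₀ q + fderiv ℝ t q u = 0 :=
    eventually_of_mem hpD fun q hq => bilinear_fderiv_add_fderiv_eq_zero mulVecCLM (hx ·)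
      (differentiable hR hq) (differentiable hx₀ hq) (differentiable ht hq) (hdx q hq)
  have hsymm : fderiv ℝ R p v *ᵥ fderiv ℝ x₀ p w = fderiv ℝ R p w *ᵥ fderiv ℝ x₀ p v :=
    bilinear_fderiv_fderiv_comm mulVecCLM (hR.contDiffAt hpD) (differentiable hx₀ hp)
      (ht.contDiffAt hpD) hdt v w
  rw [dot3_eq_dotProduct, ← mulVec_mulVec, hsymm, mulVec_mulVec]
  exact dotProduct_mulVec_self_eq_zero_of_transpose_eq_neg hskew _
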